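/- arXiv:math/0412247 — 3 statements merged into one kernel-verified Lean document; each statement's English description precedes it below -/
import Mathlib

section
/- The positive polar cone of the solvency cone admits the explicit description K* = {ξ ∈ ℝ^{1+d_c} : ξ^i ≥ 0 for every i, and ξ^j ≤ ξ^i (1+λ^{ij}) for all i,j = 1,…,1+d_c}. -/
/-!
The vectors `e_i` and `(1 + λ^{ij}) e_i - e_j` lie in `K` (the latter via the single transfer
`a = E_{ij}`), and pairing them with `ξ ∈ K*` gives the two families of inequalities. Conversely,
if `x^i + Σ_j (a^{ji} - (1 + λ^{ij}) a^{ij}) ≥ 0` and `ξ ≥ 0`, then after swapping the order of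
summation `ξ · x ≥ Σ_{i,j} (ξ^i (1 + λ^{ij}) - ξ^j) a^{ij} ≥ 0`.
-/

/-- The solvency cone `K` of Kabanov: portfolio holdings that can be made
nonnegative componentwise through nonnegative transfers `a` subject to
proportional transaction costs `lam`. -/
def solvencyCone (dc : ℕ) (lam : Fin (dc+1) → Fin (dc+1) → ℝ) : Set (Fin (dc+1) → ℝ) :=
  {x | ∃ a : Fin (dc+1) → Fin (dc+1) → ℝ, (∀ i j, 0 ≤ a i j) ∧
    ∀ i, 0 ≤ x i + ∑ j, (a j i - (1 + lam i j) * a i j)}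

/-- The positive polar cone `K*` of the solvency cone. -/
def polarCone (dc : ℕ) (lam : Fin (dc+1) → Fin (dc+1) → ℝ) : Set (Fin (dc+1) → ℝ) :=
  {ξ | ∀ x ∈ solvencyCone dc lam, 0 ≤ ∑ i, ξ i * x i}

open Finset

theorem sum_mul_sum_transfer_eq {ι R : Type*} [Fintype ι] [CommRing R] (ξ : ι → R) (c a : ι → ι → R) :
    ∑ i, ξ i * ∑ j, (a j i - c i j * a i j) = -∑ i, ∑ j, (ξ i * c i j - ξ j) * a i j := by
  simp only [mul_sum, mul_sub, sub_mul, sum_sub_distrib, neg_sub]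
  rw [sum_comm (f := fun i j => ξ i * a j i)]
  simp only [mul_assoc]

section
variable {dc : ℕ} {lam : Fin (dc+1) → Fin (dc+1) → ℝ}

theorem single_mem_solvencyCone (i : Fin (dc+1)) : Pi.single i 1 ∈ solvencyCone dc lam :=
  ⟨0, fun _ _ => le_rfl, fun k => by simp [Pi.single_apply]; split_ifs <;> norm_num⟩

theorem exchange_mem_solvencyCone (i j : Fin (dc+1)) :
    (1 + lam i j) • Pi.single i 1 - Pi.single j 1 ∈ solvencyCone dc lam := by
  refine ⟨fun p q => (Pi.single i 1 : Fin (dc+1) → ℝ) p * (Pi.single j 1 : Fin (dc+1) → ℝ) q,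
    fun p q => ?_, fun k => ?_⟩
  · simp only [Pi.single_apply]; split_ifs <;> norm_num
  · simp [Pi.single_apply, sum_sub_distrib]
    split_ifs <;> simp_all

theorem nonneg_of_mem_polarCone {ξ : Fin (dc+1) → ℝ} (hξ : ξ ∈ polarCone dc lam)
    (i : Fin (dc+1)) : 0 ≤ ξ i := by
  have : 0 ≤ ξ ⬝ᵥ Pi.single i 1 := hξ _ (single_mem_solvencyCone i)
  simpa [dotProduct_single] using this

theorem le_mul_of_mem_polarCone {ξ : Fin (dc+1) → ℝ} (hξ : ξ ∈ polarCone dc lam)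
    (i j : Fin (dc+1)) : ξ j ≤ ξ i * (1 + lam i j) := by
  have : 0 ≤ ξ ⬝ᵥ ((1 + lam i j) • Pi.single i 1 - Pi.single j 1) :=
    hξ _ (exchange_mem_solvencyCone i j)
  simp only [dotProduct_sub, dotProduct_smul, dotProduct_single, smul_eq_mul, mul_one] at this
  linarith

theorem mem_polarCone_of_le_mul {ξ : Fin (dc+1) → ℝ} (hξ : ∀ i, 0 ≤ ξ i)
    (hle : ∀ i j, ξ j ≤ ξ i * (1 + lam i j)) : ξ ∈ polarCone dc lam := by
  rintro x ⟨a, ha, hx⟩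
  calc 0 ≤ ∑ i, ∑ j, (ξ i * (1 + lam i j) - ξ j) * a i j :=
        sum_nonneg fun i _ => sum_nonneg fun j _ => mul_nonneg (sub_nonneg.2 (hle i j)) (ha i j)
    _ = -∑ i, ξ i * ∑ j, (a j i - (1 + lam i j) * a i j) := by
        rw [sum_mul_sum_transfer_eq, neg_neg]
    _ ≤ ∑ i, ξ i * x i := by
        rw [← sum_neg_distrib]
        exact sum_le_sum fun i _ => by nlinarith [mul_nonneg (hξ i) (hx i)]

end

theorem polarCone_eq_explicit_general (dc : ℕ)
    (lam : Fin (dc+1) → Fin (dc+1) → ℝ) :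
    polarCone dc lam =
      {ξ : Fin (dc+1) → ℝ | (∀ i, 0 ≤ ξ i) ∧ ∀ i j, ξ j ≤ ξ i * (1 + lam i j)} :=
  Set.ext fun _ => ⟨fun hξ => ⟨nonneg_of_mem_polarCone hξ, le_mul_of_mem_polarCone hξ⟩,
    fun hξ => mem_polarCone_of_le_mul hξ.1 hξ.2⟩

/-- Explicit description of the positive polar of the solvency cone:
`K* = {ξ : ξ ≥ 0 componentwise and ξ^j ≤ ξ^i (1+λ^{ij}) for all i,j}`. -/
theorem polarCone_eq_explicit (dc : ℕ) (hdc : 1 ≤ dc)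
    (lam : Fin (dc+1) → Fin (dc+1) → ℝ) (hlam : ∀ i j, 0 ≤ lam i j) :
    polarCone dc lam =
      {ξ : Fin (dc+1) → ℝ | (∀ i, 0 ≤ ξ i) ∧ ∀ i j, ξ j ≤ ξ i * (1 + lam i j)} :=
  polarCone_eq_explicit_general dc lam
end

section
/- Fix z^f > 0 and let a := [z^f − K¹]⁺. The function Ĝ : (0,∞) → ℝ given by Ĝ(z^c) = a · min(z^c/K̃², 1) is the least concave majorant on (0,∞) of G(z^c) = a · 1_{z^c > K̃²}; that is: Ĝ is concave on (0,∞), Ĝ(z^c) ≥ G(z^c) for all z^c > 0, and any concave function h : (0,∞) → ℝ with h ≥ G pointwise satisfies h ≥ Ĝ pointwise. -/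
/-!
Concavity is clear: `Ĝ` is a nonnegative multiple of the minimum of a linear function and a
constant. For minimality, a point `z ≤ K̃²` is a convex combination of a point `ε` near `0`, where
a concave majorant `h` of `G` is `≥ 0`, and the point `K̃² + ε`, where it is `≥ a`; concavity gives
`h z ≥ a (z - ε) / K̃²`, and letting `ε → 0⁺` yields `h z ≥ a z / K̃² = Ĝ z`.
-/

open Set Filter Topology

theorem concaveOn_mul_min_div_one {a : ℝ} (ha : 0 ≤ a) (k : ℝ) :
    ConcaveOn ℝ univ (fun x : ℝ => a * min (x / k) 1) := by
  have hlin : ConcaveOn ℝ univ (fun x : ℝ => x / k) :=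
    (LinearMap.lsmul ℝ ℝ k⁻¹).concaveOn convex_univ |>.congr fun x _ => by
      simp [div_eq_inv_mul]
  simpa only [Pi.inf_apply, Pi.smul_apply, smul_eq_mul] using
    (hlin.inf (concaveOn_const 1 convex_univ)).smul ha

theorem ite_lt_le_min_div_one {k x : ℝ} (hk : 0 < k) (hx : 0 ≤ x) :
    (if k < x then (1 : ℝ) else 0) ≤ min (x / k) 1 := by
  split_ifs with hkx
  · exact (min_eq_right ((one_le_div hk).2 hkx.le)).ge
  · exact le_min (div_nonneg hx hk.le) zero_le_one

theorem ConcaveOn.secant_le {s : Set ℝ} {f : ℝ → ℝ} (hf : ConcaveOn ℝ s f) {u v x : ℝ}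
    (hu : u ∈ s) (hv : v ∈ s) (hux : u ≤ x) (hxv : x ≤ v) (huv : u < v) :
    ((v - x) * f u + (x - u) * f v) / (v - u) ≤ f x := by
  have hvu : 0 < v - u := sub_pos.2 huv
  have key := hf.2 hu hv (div_nonneg (sub_nonneg.2 hxv) hvu.le)
    (div_nonneg (sub_nonneg.2 hux) hvu.le) (by field)
  have hx : (v - x) / (v - u) * u + (x - u) / (v - u) * v = x := by field
  simp only [smul_eq_mul, hx] at key
  rw [add_div, mul_div_right_comm, mul_div_right_comm (x - u)]
  exact key

theorem mul_div_le_of_concaveOn_Ioi {f : ℝ → ℝ} {a k x : ℝ} (hf : ConcaveOn ℝ (Ioi 0) f)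
    (hk : 0 < k) (hlow : ∀ y, 0 < y → y ≤ k → 0 ≤ f y) (hhigh : ∀ y, k < y → a ≤ f y)
    (hx : 0 < x) (hxk : x ≤ k) : a * (x / k) ≤ f x := by
  have hlim : Tendsto (fun ε : ℝ => a * ((x - ε) / k)) (𝓝[>] 0) (𝓝 (a * (x / k))) := by
    have hcont : Continuous fun ε : ℝ => a * ((x - ε) / k) := by fun_prop
    simpa using hcont.continuousWithinAt.tendsto (x := 0) (s := Ioi 0)
  refine le_of_tendsto hlim ?_
  filter_upwards [Ioo_mem_nhdsGT hx] with ε ⟨hε, hεx⟩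
  have hchord := hf.secant_le (u := ε) (v := k + ε) (x := x) hε (mem_Ioi.2 (by linarith))
    hεx.le (by linarith) (by linarith)
  have hfε := hlow ε hε (by linarith)
  have hfk := hhigh (k + ε) (by linarith)
  have hxε : 0 ≤ x - ε := by linarith
  rw [add_sub_cancel_right] at hchord
  calc a * ((x - ε) / k) ≤ ((k + ε - x) * f ε + (x - ε) * f (k + ε)) / k := by
        rw [← mul_div_assoc]
        gcongr
        nlinarith
    _ ≤ f x := hchord

theorem mul_min_div_one_le_of_concaveOn_Ioi {f : ℝ → ℝ} {a k : ℝ} (hk : 0 < k)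
    (hf : ConcaveOn ℝ (Ioi 0) f)
    (hmaj : ∀ y, 0 < y → a * (if k < y then (1 : ℝ) else 0) ≤ f y) {x : ℝ} (hx : 0 < x) :
    a * min (x / k) 1 ≤ f x := by
  rcases lt_or_ge k x with hkx | hxk
  · simpa [hkx, min_eq_right ((one_le_div hk).2 hkx.le)] using hmaj x hx
  · rw [min_eq_left ((div_le_one hk).2 hxk)]
    refine mul_div_le_of_concaveOn_Ioi hf hk (fun y hy hyk => ?_) (fun y hky => ?_) hx hxk
    · simpa [not_lt.2 hyk] using hmaj y hy
    · simpa [hky] using hmaj y (hk.trans hky)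

theorem least_concave_majorant_digital_general (K1 K2 l21 : ℝ)
    (hK2 : 0 < K2) (h21 : 0 ≤ l21)
    (zf : ℝ) :
    ConcaveOn ℝ (Set.Ioi (0:ℝ))
      (fun zc : ℝ => max (zf - K1) 0 * min (zc / (K2 / (1 + l21))) 1) ∧
    (∀ zc : ℝ, 0 < zc →
      max (zf - K1) 0 * (if K2 / (1 + l21) < zc then (1:ℝ) else 0) ≤
        max (zf - K1) 0 * min (zc / (K2 / (1 + l21))) 1) ∧
    (∀ h : ℝ → ℝ, ConcaveOn ℝ (Set.Ioi (0:ℝ)) h →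
      (∀ zc : ℝ, 0 < zc →
        max (zf - K1) 0 * (if K2 / (1 + l21) < zc then (1:ℝ) else 0) ≤ h zc) →
      ∀ zc : ℝ, 0 < zc →
        max (zf - K1) 0 * min (zc / (K2 / (1 + l21))) 1 ≤ h zc) := by
  have hk : 0 < K2 / (1 + l21) := div_pos hK2 (by linarith)
  have ha : 0 ≤ max (zf - K1) 0 := le_max_right _ _
  refine ⟨(concaveOn_mul_min_div_one ha _).subset (subset_univ _) (convex_Ioi 0), ?_, ?_⟩
  · exact fun zc hzc => mul_le_mul_of_nonneg_left (ite_lt_le_min_div_one hk hzc.le) ha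
  · exact fun h hconc hmaj zc hzc => mul_min_div_one_le_of_concaveOn_Ioi hk hconc hmaj hzc

/-- With `a = [z^f − K¹]⁺` and `K̃² = K²/(1+λ^{21})`, the function
`Ĝ(z^c) = a · min(z^c/K̃², 1)` is the least concave majorant on `(0,∞)` of
`G(z^c) = a · 1_{z^c > K̃²}`: it is concave, dominates `G`, and is dominated by
every concave majorant of `G`. -/
theorem least_concave_majorant_digital (K1 K2 l21 : ℝ)
    (hK1 : 0 < K1) (hK2 : 0 < K2) (h21 : 0 ≤ l21)
    (zf : ℝ) (hzf : 0 < zf) :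
    ConcaveOn ℝ (Set.Ioi (0:ℝ))
      (fun zc : ℝ => max (zf - K1) 0 * min (zc / (K2 / (1 + l21))) 1) ∧
    (∀ zc : ℝ, 0 < zc →
      max (zf - K1) 0 * (if K2 / (1 + l21) < zc then (1:ℝ) else 0) ≤
        max (zf - K1) 0 * min (zc / (K2 / (1 + l21))) 1) ∧
    (∀ h : ℝ → ℝ, ConcaveOn ℝ (Set.Ioi (0:ℝ)) h →
      (∀ zc : ℝ, 0 < zc →
        max (zf - K1) 0 * (if K2 / (1 + l21) < zc then (1:ℝ) else 0) ≤ h zc) →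
      ∀ zc : ℝ, 0 < zc →
        max (zf - K1) 0 * min (zc / (K2 / (1 + l21))) 1 ≤ h zc) :=
  least_concave_majorant_digital_general K1 K2 l21 hK2 h21 zf
end

section
/- Let X be an integrable real random variable on a probability space, and let K̃ > 0 and c > 0. Define φ(Δ) := E[(X − Δ·K̃)⁺] + c·Δ for Δ ≥ 0. Then (i) φ is convex on [0,∞); and (ii) if K̃ · P(X ≥ 0) ≤ c, then φ(Δ) ≥ φ(0) for every Δ ≥ 0, i.e. the minimum of φ over [0,∞) is attained at Δ = 0. -/
/-!
The map `Δ ↦ (x - ΔK̃)⁺` is a maximum of affine maps, hence convex for every `x`, and convexity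
survives integration in `ω`. For the minimum: raising the hedge from `0` to `Δ` lowers the payoff
`X⁺` by at most `ΔK̃`, and only on `{X ≥ 0}`, so `E[X⁺] - E[(X - ΔK̃)⁺] ≤ ΔK̃ P(X ≥ 0) ≤ cΔ`.
-/

open MeasureTheory

lemma convexOn_max_sub_mul_zero (x k : ℝ) {s : Set ℝ} (hs : Convex ℝ s) :
    ConvexOn ℝ s fun t : ℝ => max (x - t * k) 0 :=
  ((convexOn_const x hs).sub ((LinearMap.mulRight ℝ k).concaveOn hs)).sup (convexOn_const 0 hs)

lemma max_sub_max_sub_le_ite {x t : ℝ} (ht : 0 ≤ t) :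
    max x 0 - max (x - t) 0 ≤ if 0 ≤ x then t else 0 := by
  split_ifs with hx
  · linarith [le_max_left (x - t) 0, max_eq_left hx]
  · rw [max_eq_right (not_le.mp hx).le, max_eq_right (by linarith [not_le.mp hx])]; simp

lemma integral_le_mul_measureReal_of_le_indicator {Ω : Type*} [MeasurableSpace Ω]
    {μ : Measure Ω} [IsFiniteMeasure μ] {f : Ω → ℝ} (hf : Integrable f μ) {s : Set Ω} {t : ℝ}
    (ht : 0 ≤ t) (h : ∀ ω, f ω ≤ s.indicator (fun _ => t) ω) :
    ∫ ω, f ω ∂μ ≤ t * μ.real s := by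
  -- `s` need not be measurable, so pass to a measurable hull of the same measure.
  have hle : ∀ ω, f ω ≤ (toMeasurable μ s).indicator (fun _ => t) ω := fun ω =>
    (h ω).trans (Set.indicator_le_indicator_of_subset (subset_toMeasurable μ s) (fun _ => ht) ω)
  calc ∫ ω, f ω ∂μ ≤ ∫ ω, (toMeasurable μ s).indicator (fun _ => t) ω ∂μ :=
        integral_mono hf ((integrable_const t).indicator (measurableSet_toMeasurable μ s)) hle
    _ = t * μ.real s := by
        rw [integral_indicator_const t (measurableSet_toMeasurable μ s), smul_eq_mul, mul_comm,
          measureReal_def, measure_toMeasurable, ← measureReal_def]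

theorem buy_and_hold_cost_convex_min_at_zero_general
    {Ω : Type*} [MeasurableSpace Ω] (μ : Measure Ω) [IsProbabilityMeasure μ]
    (X : Ω → ℝ) (hX : Integrable X μ) (Kt c : ℝ) (hK : 0 < Kt) :
    ConvexOn ℝ (Set.Ici (0:ℝ))
      (fun Δ : ℝ => (∫ ω, max (X ω - Δ * Kt) 0 ∂μ) + c * Δ) ∧
    (Kt * (μ {ω | 0 ≤ X ω}).toReal ≤ c →
      ∀ Δ : ℝ, 0 ≤ Δ →
        (∫ ω, max (X ω - 0 * Kt) 0 ∂μ) + c * 0 ≤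
          (∫ ω, max (X ω - Δ * Kt) 0 ∂μ) + c * Δ) := by
  have hint (Δ : ℝ) : Integrable (fun ω => max (X ω - Δ * Kt) 0) μ :=
    (hX.sub (integrable_const (Δ * Kt))).pos_part
  refine ⟨(integral_convexOn_of_integrand_ae (convex_Ici 0)
      (ae_of_all _ fun ω => convexOn_max_sub_mul_zero (X ω) Kt (convex_Ici 0))
      fun Δ _ => hint Δ).add ((LinearMap.mulLeft ℝ c).convexOn (convex_Ici 0)), ?_⟩
  intro hP Δ hΔ
  have hgain : ∫ ω, (max (X ω - 0 * Kt) 0 - max (X ω - Δ * Kt) 0) ∂μ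
      ≤ Δ * Kt * μ.real {ω | 0 ≤ X ω} :=
    integral_le_mul_measureReal_of_le_indicator ((hint 0).sub (hint Δ)) (by positivity)
      fun ω => by
        simpa only [Pi.sub_apply, zero_mul, sub_zero, Set.indicator_apply, Set.mem_ofPred_eq]
          using max_sub_max_sub_le_ite (x := X ω) (by positivity : 0 ≤ Δ * Kt)
  rw [integral_sub (hint 0) (hint Δ), measureReal_def] at hgain
  nlinarith [mul_le_mul_of_nonneg_left hP hΔ]

/-- The buy-and-hold cost functional `φ(Δ) = E[(X − ΔK̃)⁺] + cΔ` is convex on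
`[0,∞)`, and if `K̃·P(X ≥ 0) ≤ c` then `φ` attains its minimum over `[0,∞)`
at `Δ = 0`. -/
theorem buy_and_hold_cost_convex_min_at_zero
    {Ω : Type*} [MeasurableSpace Ω] (μ : Measure Ω) [IsProbabilityMeasure μ]
    (X : Ω → ℝ) (hX : Integrable X μ) (Kt c : ℝ) (hK : 0 < Kt) (hc : 0 < c) :
    ConvexOn ℝ (Set.Ici (0:ℝ))
      (fun Δ : ℝ => (∫ ω, max (X ω - Δ * Kt) 0 ∂μ) + c * Δ) ∧
    (Kt * (μ {ω | 0 ≤ X ω}).toReal ≤ c →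
      ∀ Δ : ℝ, 0 ≤ Δ →
        (∫ ω, max (X ω - 0 * Kt) 0 ∂μ) + c * 0 ≤
          (∫ ω, max (X ω - Δ * Kt) 0 ∂μ) + c * Δ) :=
  buy_and_hold_cost_convex_min_at_zero_general μ X hX Kt c hK
end
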